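/- Let L be a language over σ₂, let O be the family of σ-caterpillars described by the words of L, let O⁺ be the family of σ-caterpillars which contain homomorphic images of members of O (i.e., caterpillars T such that some member of O admits a homomorphism to T), and let L⁺ be the set of all σ₂-words describing members of O⁺. Then there exists a σ-structure A such that (O, A) is a homomorphism duality if and only if L⁺ is a regular language. -/

import Mathlib

/-! Basic framework: relational structures of a finite type `σ` with arities `ar`,
homomorphisms, the binary type/alphabet `σ₂`, the functors `β` and `β*`,
path structures `P_w`, nondeterministic acceptance, and caterpillar notions. -/

/-- A `σ`-structure: a finite universe together with an `ar R`-ary relation for each `R ∈ σ`. -/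
structure Str (σ : Type) (ar : σ → ℕ) : Type 1 where
  V : Type
  finiteV : Finite V
  rel : ∀ R : σ, Set ((Fin (ar R)) → V)

/-- The alphabet (and binary type) `σ₂`: a symbol `R^(i,j)` for each `R ∈ σ` of arity `k`
and each `(i,j) ∈ {1,…,k}²`. -/
abbrev Sig2 (σ : Type) (ar : σ → ℕ) : Type := Σ R : σ, Fin (ar R) × Fin (ar R)

/-- A `σ₂`-structure: a finite universe with a binary relation for each symbol of `σ₂`. -/
structure Str2 (σ : Type) (ar : σ → ℕ) : Type 1 where
  V : Type
  finiteV : Finite V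
  rel : Sig2 σ ar → Set (V × V)

variable {σ : Type} [Finite σ] {ar : σ → ℕ}

/-- Existence of a homomorphism between `σ`-structures. -/
def Str.Hom (A B : Str σ ar) : Prop :=
  ∃ f : A.V → B.V, ∀ (R : σ) (t : Fin (ar R) → A.V), t ∈ A.rel R → (fun i => f (t i)) ∈ B.rel R

/-- Existence of a homomorphism between `σ₂`-structures. -/
def Str2.Hom (X Y : Str2 σ ar) : Prop :=
  ∃ f : X.V → Y.V, ∀ (s : Sig2 σ ar) (p : X.V × X.V), p ∈ X.rel s → (f p.1, f p.2) ∈ Y.rel s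

/-- Isomorphism of `σ`-structures. -/
def Str.Iso (A B : Str σ ar) : Prop :=
  ∃ f : A.V ≃ B.V, ∀ (R : σ) (t : Fin (ar R) → A.V), t ∈ A.rel R ↔ (fun i => f (t i)) ∈ B.rel R

/-- The functor `β`: same universe, `(x_i, x_j) ∈ R^(i,j)(β B)` for each `(x_1,…,x_k) ∈ R(B)`. -/
def strBeta (B : Str σ ar) : Str2 σ ar where
  V := B.V
  finiteV := B.finiteV
  rel := fun s => { p | ∃ t ∈ B.rel s.1, t s.2.1 = p.1 ∧ t s.2.2 = p.2 }

/-- The carrier of `β*(X)⁺`: a copy of each element of `X` together with fresh elements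
`x_1, …, x_k` for each `(x,y) ∈ R^(i,j)(X)`. -/
abbrev PlusCarrier (X : Str2 σ ar) : Type :=
  X.V ⊕ Σ s : Sig2 σ ar, { p : X.V × X.V // p ∈ X.rel s } × Fin (ar s.1)

/-- The identifications generating `∼`: for `(x,y) ∈ R^(i,j)(X)`, identify `x_i` with `x`
and `x_j` with `y`. -/
inductive PreRel (X : Str2 σ ar) : PlusCarrier X → PlusCarrier X → Prop
  | left (s : Sig2 σ ar) (p : { p : X.V × X.V // p ∈ X.rel s }) :
      PreRel X (Sum.inr ⟨s, p, s.2.1⟩) (Sum.inl p.1.1)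
  | right (s : Sig2 σ ar) (p : { p : X.V × X.V // p ∈ X.rel s }) :
      PreRel X (Sum.inr ⟨s, p, s.2.2⟩) (Sum.inl p.1.2)

/-- The functor `β*`, left adjoint to `β`. -/
def strBetaStar (X : Str2 σ ar) : Str σ ar where
  V := Quot (PreRel X)
  finiteV := by
    have : Finite X.V := X.finiteV
    exact Finite.of_surjective (Quot.mk (PreRel X)) (fun q => Quot.exists_rep q)
  rel := fun R => { t | ∃ (i j : Fin (ar R)) (p : X.V × X.V) (hp : p ∈ X.rel ⟨R, (i, j)⟩),
      t = fun m => Quot.mk (PreRel X) (Sum.inr ⟨⟨R, (i, j)⟩, ⟨p, hp⟩, m⟩) }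

/-- The `σ₂`-path `P_w` of a word `w ∈ σ₂*`. -/
def PathStr (w : List (Sig2 σ ar)) : Str2 σ ar where
  V := Fin (w.length + 1)
  finiteV := inferInstance
  rel := fun s => { p | ∃ t : Fin w.length, w.get t = s ∧ p = (t.castSucc, t.succ) }

/-- Acceptance of the word `w` by the `σ₂`-structure `X` viewed as a nondeterministic
automaton with initial states `I` and terminal states `T`. -/
def NAccepts (X : Str2 σ ar) (I T : Set X.V) (w : List (Sig2 σ ar)) : Prop :=
  ∃ f : Fin (w.length + 1) → X.V,
    (∀ (s : Sig2 σ ar) (p : Fin (w.length + 1) × Fin (w.length + 1)),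
        p ∈ (PathStr w).rel s → (f p.1, f p.2) ∈ X.rel s) ∧
    f 0 ∈ I ∧ f (Fin.last w.length) ∈ T

/-! Caterpillars. -/

/-- The blocks (hyperedges) of a `σ`-structure. -/
def Str.Block (A : Str σ ar) : Type := Σ R : σ, { t : Fin (ar R) → A.V // t ∈ A.rel R }

/-- The underlying simple graph of the incidence multigraph `Inc(A)`. -/
def IncGraph (A : Str σ ar) : SimpleGraph (A.V ⊕ A.Block) :=
  SimpleGraph.fromRel (fun u v =>
    ∃ (b : A.Block) (i : Fin (ar b.1)), u = Sum.inl (b.2.1 i) ∧ v = Sum.inr b)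

/-- `a` is a leaf when it has degree one in `Inc(A)`, i.e. there is exactly one
incidence `(block, coordinate)` at `a`. -/
def Str.IsLeaf (A : Str σ ar) (a : A.V) : Prop :=
  Nat.card { e : Σ b : A.Block, Fin (ar b.1) // e.1.2.1 e.2 = a } = 1

/-- A block is pendant when it is incident to at most one non-leaf. -/
def Str.IsPendant (A : Str σ ar) (b : A.Block) : Prop :=
  Set.Subsingleton { a : A.V | ¬ A.IsLeaf a ∧ ∃ i, b.2.1 i = a }

/-- A `σ`-tree: the incidence multigraph is connected, has no cycles and no parallel edges. -/
def Str.IsTreeStr (A : Str σ ar) : Prop :=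
  (∀ b : A.Block, Function.Injective b.2.1) ∧ (IncGraph A).IsTree

/-- A `σ`-path: a `σ`-tree with at most two pendant blocks. -/
def Str.IsPathStr (A : Str σ ar) : Prop :=
  A.IsTreeStr ∧ Nat.card { b : A.Block // A.IsPendant b } ≤ 2

/-- The vertices removed when pruning: leaves attached to pendant blocks only. -/
def Str.Removed (A : Str σ ar) (a : A.V) : Prop :=
  A.IsLeaf a ∧ ∀ b : A.Block, (∃ i, b.2.1 i = a) → A.IsPendant b

/-- The structure obtained by removing all pendant blocks and the leaves attached to them. -/
def prune (A : Str σ ar) : Str σ ar where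
  V := { a : A.V // ¬ A.Removed a }
  finiteV := by have : Finite A.V := A.finiteV; exact inferInstance
  rel := fun R => { t | ∃ (t₀ : Fin (ar R) → A.V) (h₀ : t₀ ∈ A.rel R),
      ¬ A.IsPendant ⟨R, t₀, h₀⟩ ∧ ∀ i, (t i : A.V) = t₀ i }

/-- A `σ`-caterpillar: a `σ`-tree which is a path or becomes one after removing all
pendant blocks and the leaves attached to them. -/
def Str.IsCaterpillar (A : Str σ ar) : Prop :=
  A.IsTreeStr ∧ (A.IsPathStr ∨ (prune A).IsPathStr)

/-! Dualities. -/

/-- `(O, A)` is a homomorphism duality. -/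
def IsDuality (O : Set (Str σ ar)) (A : Str σ ar) : Prop :=
  ∀ B : Str σ ar, B.Hom A ↔ ∀ T ∈ O, ¬ T.Hom B

/-- `A` has caterpillar duality. -/
def HasCatDuality (A : Str σ ar) : Prop :=
  ∃ O : Set (Str σ ar), (∀ T ∈ O, T.IsCaterpillar) ∧ IsDuality O A

/-- `A` has path duality. -/
def HasPathDuality (A : Str σ ar) : Prop :=
  ∃ O : Set (Str σ ar), (∀ T ∈ O, T.IsPathStr) ∧ IsDuality O A

/-! The construction `Γ` on a deterministic automaton. -/

/-- The structure `Γ(D, {q₀}, T)`: universe is the set of subsets of `V(D)` containing `q₀`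
and disjoint from `T`; `(X_1,…,X_k) ∈ R(Γ D)` iff for all `(i,j)` and all `a ∈ X_i`,
every `b` with `(a,b) ∈ R^(i,j)(D)` lies in `X_j`. -/
def GammaStr (D : Str2 σ ar) (q0 : D.V) (T : Set D.V) : Str σ ar where
  V := { X : Set D.V // q0 ∈ X ∧ ∀ x ∈ X, x ∉ T }
  finiteV := by have : Finite D.V := D.finiteV; exact inferInstance
  rel := fun R => { t | ∀ (i j : Fin (ar R)) (a : D.V), a ∈ (t i).1 →
      ∀ b : D.V, (a, b) ∈ D.rel ⟨R, (i, j)⟩ → b ∈ (t j).1 }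

theorem test : True := trivial

/-! `β*` is left adjoint to `β`, so `β*(P_v) → B` iff the word `v` labels a walk in `β B`, that is,
iff `v` is accepted by `β B` read as a nondeterministic automaton whose states are all initial and
final. If `(O, A)` is a duality, then `v ∈ L⁺` iff `β*(P_v) ↛ A`, so `L⁺` is the complement of the
language of the finite automaton `β A`. Conversely, if a DFA `M` accepts `L⁺`, then `Γ(M)` is a dual
of `O`: a homomorphism `B → Γ(M)` keeps every state that `M` reaches along a walk of `β B`
non-accepting, which rules out `β*(P_w) → B` for `w ∈ L ⊆ L⁺`; and when there is no such `w`,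
sending `b` to the set of states that `M` reaches on words walking to `b` is a homomorphism
`B → Γ(M)`. -/
section Automata

variable {α Q P : Type*}

theorem NFA.mem_evalFrom_iff_exists_run {M : NFA α Q} {S : Set Q} {q : Q} {x : List α} :
    q ∈ M.evalFrom S x ↔ ∃ f : Fin (x.length + 1) → Q, f 0 ∈ S ∧ f (Fin.last _) = q ∧
      ∀ i : Fin x.length, f i.succ ∈ M.step (f i.castSucc) (x.get i) := by
  induction x generalizing S with
  | nil =>
    refine ⟨fun h => ⟨fun _ => q, h, rfl, fun i => i.elim0⟩, ?_⟩
    rintro ⟨f, h0, rfl, -⟩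
    exact h0
  | cons a x ih =>
    rw [NFA.evalFrom_cons, ih]
    constructor
    · rintro ⟨g, hg0, rfl, hg⟩
      obtain ⟨s, hs, hsg⟩ := NFA.mem_stepSet.mp hg0
      refine ⟨Fin.cons s g, hs, rfl, Fin.cases hsg fun i => ?_⟩
      simpa [← Fin.succ_castSucc] using hg i
    · rintro ⟨f, hf0, rfl, hf⟩
      refine ⟨Fin.tail f, NFA.mem_stepSet.mpr ⟨f 0, hf0, hf 0⟩, rfl, fun i => ?_⟩
      simpa [Fin.tail, ← Fin.succ_castSucc] using hf i.succ

theorem DFA.evalFrom_simulates {N : NFA α Q} {M : DFA α P} (R : Q → P → Prop)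
    (hR : ∀ a b s p, b ∈ N.step a s → R a p → R b (M.step p s)) {x : List α} :
    ∀ {S : Set Q} {p : P}, (∀ a ∈ S, R a p) → ∀ b ∈ N.evalFrom S x, R b (M.evalFrom p x) := by
  induction x with
  | nil => exact fun hS => hS
  | cons s x ih =>
    intro S p hS
    refine ih fun b hb => ?_
    obtain ⟨a, ha, hab⟩ := NFA.mem_stepSet.mp hb
    exact hR a b s p hab (hS a ha)

theorem NFA.isRegular_accepts [Finite Q] (M : NFA α Q) : M.accepts.IsRegular := by
  classical
  have := Fintype.ofFinite Q
  exact Language.isRegular_iff.mpr ⟨_, inferInstance, M.toDFA, M.toDFA_correct⟩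

end Automata

section
variable {σ : Type} {ar : σ → ℕ}

theorem Str.Hom.refl (A : Str σ ar) : A.Hom A :=
  ⟨id, fun _ _ ht => ht⟩

theorem Str.Hom.trans {A B C : Str σ ar} : A.Hom B → B.Hom C → A.Hom C
  | ⟨f, hf⟩, ⟨g, hg⟩ => ⟨g ∘ f, fun R t ht => hg R _ (hf R t ht)⟩

theorem isDuality_image_iff {ι : Type*} {O : ι → Str σ ar} {L : Set ι} {A : Str σ ar} :
    IsDuality (O '' L) A ↔ ∀ B : Str σ ar, B.Hom A ↔ ∀ w ∈ L, ¬ (O w).Hom B := by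
  simp [IsDuality]

instance Str2.finite_V (Y : Str2 σ ar) : Finite Y.V := Y.finiteV

def Str2.toNFA (Y : Str2 σ ar) : NFA (Sig2 σ ar) Y.V where
  step a s := {b | (a, b) ∈ Y.rel s}
  start := Set.univ
  accept := Set.univ

theorem pathStr_hom_iff_mem_toNFA_accepts {Y : Str2 σ ar} {v : List (Sig2 σ ar)} :
    (PathStr v).Hom Y ↔ v ∈ Y.toNFA.accepts := by
  simp only [NFA.mem_accepts, NFA.mem_evalFrom_iff_exists_run]
  constructor
  · rintro ⟨f, hf⟩
    exact ⟨_, trivial, f, trivial, rfl, fun i => hf _ _ ⟨i, rfl, rfl⟩⟩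
  · rintro ⟨-, -, f, -, -, hf⟩
    refine ⟨f, ?_⟩
    rintro s p ⟨i, rfl, rfl⟩
    exact hf i

def DFA.toStr2 {Q : Type} [Finite Q] (M : DFA (Sig2 σ ar) Q) : Str2 σ ar where
  V := Q
  finiteV := inferInstance
  rel s := {p | M.step p.1 s = p.2}

end

section
variable {σ : Type} [Finite σ] {ar : σ → ℕ}

theorem strBetaStar_hom_iff {X : Str2 σ ar} {B : Str σ ar} :
    (strBetaStar X).Hom B ↔ X.Hom (strBeta B) := by
  constructor
  · rintro ⟨g, hg⟩
    refine ⟨fun x => g (Quot.mk _ (Sum.inl x)), ?_⟩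
    rintro s p hp
    refine ⟨_, hg s.1 _ ⟨s.2.1, s.2.2, p, hp, rfl⟩, ?_, ?_⟩
    · exact congrArg g (Quot.sound (PreRel.left s ⟨p, hp⟩))
    · exact congrArg g (Quot.sound (PreRel.right s ⟨p, hp⟩))
  · rintro ⟨f, hf⟩
    choose t ht ht₁ ht₂ using fun (s : Sig2 σ ar) (p : {p // p ∈ X.rel s}) => hf s p.1 p.2
    let g : PlusCarrier X → B.V := Sum.elim f fun e => t e.1 e.2.1 e.2.2
    have hg : ∀ u u', PreRel X u u' → g u = g u' := by
      rintro _ _ (⟨s, p⟩ | ⟨s, p⟩)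
      exacts [ht₁ s p, ht₂ s p]
    refine ⟨Quot.lift g hg, ?_⟩
    rintro R _ ⟨i, j, p, hp, rfl⟩
    exact ht ⟨R, (i, j)⟩ ⟨p, hp⟩

theorem strBetaStar_pathStr_hom_iff {v : List (Sig2 σ ar)} {B : Str σ ar} :
    (strBetaStar (PathStr v)).Hom B ↔ v ∈ (strBeta B).toNFA.accepts :=
  strBetaStar_hom_iff.trans pathStr_hom_iff_mem_toNFA_accepts

def upClosure (L : Language (Sig2 σ ar)) : Language (Sig2 σ ar) :=
  {v | ∃ w ∈ L, (strBetaStar (PathStr w)).Hom (strBetaStar (PathStr v))}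

theorem upClosure_eq_compl_of_isDuality {L : Language (Sig2 σ ar)} {A : Str σ ar}
    (hA : IsDuality ((fun w => strBetaStar (PathStr w)) '' L) A) :
    upClosure L = ((strBeta A).toNFA.accepts)ᶜ := by
  ext v
  change (∃ w ∈ L, _) ↔ v ∉ (strBeta A).toNFA.accepts
  rw [← strBetaStar_pathStr_hom_iff, isDuality_image_iff.mp hA]
  push Not
  rfl

variable {Q : Type} [Finite Q] {M : DFA (Sig2 σ ar) Q} {L : Language (Sig2 σ ar)}

theorem not_hom_of_hom_gammaStr (hM : M.accepts = upClosure L) {B : Str σ ar}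
    (hB : B.Hom (GammaStr M.toStr2 M.start M.accept)) {w : List (Sig2 σ ar)} (hw : w ∈ L) :
    ¬ (strBetaStar (PathStr w)).Hom B := by
  intro hwB
  obtain ⟨h, hh⟩ := hB
  obtain ⟨b, -, hb⟩ := NFA.mem_accepts.mp (strBetaStar_pathStr_hom_iff.mp hwB)
  have hsim : ∀ a b s q, b ∈ (strBeta B).toNFA.step a s → q ∈ (h a).1 →
      M.step q s ∈ (h b).1 := by
    rintro a b ⟨R, i, j⟩ q ⟨t, ht, rfl, rfl⟩ hq
    exact hh R t ht i j q hq _ rfl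
  have hrun : M.eval w ∈ (h b).1 :=
    DFA.evalFrom_simulates (fun b q => q ∈ (h b).1) hsim (fun a _ => (h a).2.1) b hb
  have hacc : w ∈ M.accepts := hM ▸ ⟨w, hw, .refl _⟩
  exact (h b).2.2 _ hrun hacc

theorem hom_gammaStr_of_forall_not_hom (hM : M.accepts = upClosure L) {B : Str σ ar}
    (hB : ∀ w ∈ L, ¬ (strBetaStar (PathStr w)).Hom B) :
    B.Hom (GammaStr M.toStr2 M.start M.accept) := by
  let N := (strBeta B).toNFA
  refine ⟨fun b => ⟨{q | ∃ v, b ∈ N.eval v ∧ M.eval v = q}, ⟨[], trivial, rfl⟩, ?_⟩, ?_⟩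
  · rintro _ ⟨v, hv, rfl⟩ hacc
    obtain ⟨w, hw, hwv⟩ : v ∈ upClosure L := hM ▸ hacc
    exact hB w hw (hwv.trans (strBetaStar_pathStr_hom_iff.mpr ⟨b, trivial, hv⟩))
  · rintro R t ht i j _ ⟨v, hv, rfl⟩ q (hq : M.step _ _ = q)
    refine ⟨v ++ [⟨R, (i, j)⟩], ?_, (DFA.eval_append_singleton ..).trans hq⟩
    rw [NFA.eval_append_singleton]
    exact NFA.mem_stepSet.mpr ⟨t i, hv, t, ht, rfl, rfl⟩

theorem gammaStr_isDuality (hM : M.accepts = upClosure L) :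
    IsDuality ((fun w => strBetaStar (PathStr w)) '' L) (GammaStr M.toStr2 M.start M.accept) :=
  isDuality_image_iff.mpr fun _ =>
    ⟨fun hB _ hw => not_hom_of_hom_gammaStr hM hB hw, hom_gammaStr_of_forall_not_hom hM⟩

end

/-- for `O` the family of caterpillars described by `L`, there exists `A`
such that `(O, A)` is a homomorphism duality if and only if `L⁺` is regular, where `L⁺`
is the set of words describing caterpillars containing homomorphic images of members of `O`. -/
theorem stmt_8 (σ : Type) [Finite σ] (ar : σ → ℕ) (L : Language (Sig2 σ ar)) :
    (∃ A : Str σ ar, ∀ B : Str σ ar,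
        B.Hom A ↔ ∀ w ∈ L, ¬ (strBetaStar (PathStr w)).Hom B) ↔
    Language.IsRegular { v : List (Sig2 σ ar) |
        ∃ w ∈ L, (strBetaStar (PathStr w)).Hom (strBetaStar (PathStr v)) } := by
  change _ ↔ (upClosure L).IsRegular
  refine (exists_congr fun _ => isDuality_image_iff.symm).trans ?_
  constructor
  · rintro ⟨A, hA⟩
    rw [upClosure_eq_compl_of_isDuality hA]
    exact (NFA.isRegular_accepts _).compl
  · rintro ⟨Q, _, M, hM⟩
    exact ⟨_, gammaStr_isDuality hM⟩
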